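/- Let G be a finite simple connected graph on n vertices. Then the Sudoku number of G satisfies sn(G) = n − 1 if, and only if, G is the complete graph on n vertices. -/

import Mathlib

/-- A proper `k`-colouring of `G` using colours `{1, …, k}`. -/
def IsProperColouring {V : Type*} (G : SimpleGraph V) (k : ℕ) (φ : V → ℕ) : Prop :=
  (∀ v, φ v ∈ Finset.Icc 1 k) ∧ ∀ ⦃u v⦄, G.Adj u v → φ u ≠ φ v

/-- A partial proper `k`-colouring of `G` (uncoloured vertices get `none`). -/
def IsPartialProper {V : Type*} (G : SimpleGraph V) (k : ℕ) (ψ : V → Option ℕ) : Prop :=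
  (∀ v c, ψ v = some c → c ∈ Finset.Icc 1 k) ∧
    ∀ ⦃u v⦄, G.Adj u v → ∀ c, ψ u = some c → ψ v ≠ some c

/-- `φ` extends the partial colouring `ψ`. -/
def ExtendsPartial {V : Type*} (φ : V → ℕ) (ψ : V → Option ℕ) : Prop :=
  ∀ v c, ψ v = some c → φ v = c

/-- A Sudoku colouring: a partial proper `k`-colouring with exactly one extension to a
proper `k`-colouring of all of `G`. -/
def IsSudoku {V : Type*} (G : SimpleGraph V) (k : ℕ) (ψ : V → Option ℕ) : Prop :=
  IsPartialProper G k ψ ∧ ∃! φ : V → ℕ, IsProperColouring G k φ ∧ ExtendsPartial φ ψ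

/-- The Sudoku number: the least number of coloured vertices in a Sudoku colouring. -/
noncomputable def sudokuNumber {V : Type*} [Fintype V] (G : SimpleGraph V) (k : ℕ) : ℕ :=
  sInf {m | ∃ ψ : V → Option ℕ, IsSudoku G k ψ ∧
    (Finset.univ.filter fun v => (ψ v).isSome).card = m}

/-- The set of colours appearing on the coloured neighbours of `v` under `ψ`. -/
def nbrColours {V : Type*} [Fintype V] [DecidableEq V] (G : SimpleGraph V)
    [DecidableRel G.Adj] (ψ : V → Option ℕ) (v : V) : Finset ℕ :=
  (G.neighborFinset v).biUnion fun u => (ψ u).toFinset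

/-- A vertex is full (w.r.t. a proper `k`-colouring `φ`) if every colour other than its own
appears on its neighbourhood. -/
def IsFull {V : Type*} [Fintype V] [DecidableEq V] (G : SimpleGraph V)
    [DecidableRel G.Adj] (k : ℕ) (φ : V → ℕ) (v : V) : Prop :=
  (G.neighborFinset v).image φ = Finset.Icc 1 k \ {φ v}

/-- A proper `k`-colouring is 1-minimal if it has as few colour-1 vertices as possible. -/
def IsOneMinimal {V : Type*} [Fintype V] (G : SimpleGraph V) (k : ℕ) (φ : V → ℕ) : Prop :=
  IsProperColouring G k φ ∧ ∀ φ' : V → ℕ, IsProperColouring G k φ' →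
    (Finset.univ.filter fun v => φ v = 1).card ≤ (Finset.univ.filter fun v => φ' v = 1).card

/-!
For `Kₙ` every proper `n`-colouring is a bijection onto the colours, so swapping two uncoloured
vertices of a Sudoku colouring gives a second extension: at most one vertex can be left
uncoloured, and leaving exactly one uncoloured works.

If `G` is connected but not complete, we find a `χ(G)`-colouring `φ` and a determining pair
`u ≠ v`: `φ` is the only `χ(G)`-colouring agreeing with it off `{u, v}`, so colouring the other
`n - 2` vertices as in `φ` is a Sudoku colouring. Such pairs come from full vertices, which see
every other colour around them and so are forced once their neighbours are. Full vertices are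
supplied by extremal choices: a colouring with fewest vertices of colour `1`, then one of maximal
colour sum.
-/

open Finset

section Colouring

variable {V : Type*} {G : SimpleGraph V} {k : ℕ}

theorem IsProperColouring.colorable {φ : V → ℕ} (hφ : IsProperColouring G k φ) :
    G.Colorable k := by
  have hφ₁ : ∀ v, 1 ≤ φ v ∧ φ v ≤ k := fun v => mem_Icc.mp (hφ.1 v)
  refine ⟨SimpleGraph.Coloring.mk (fun v => ⟨φ v - 1, by have := hφ₁ v; omega⟩) ?_⟩
  intro u v huv h
  have := hφ₁ u
  have := hφ₁ v
  exact hφ.2 huv (by simp only [Fin.mk.injEq] at h; omega)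

theorem SimpleGraph.Colorable.exists_isProperColouring (h : G.Colorable k) :
    ∃ φ, IsProperColouring G k φ := by
  obtain ⟨C⟩ := h
  refine ⟨fun v => C v + 1, fun v => ?_, fun u v huv h => C.valid huv ?_⟩
  · simp only [mem_Icc]
    omega
  · exact Fin.ext (by simpa using h)

theorem exists_isProperColouring_of_chromaticNumber (hχ : G.chromaticNumber = k) :
    ∃ φ, IsProperColouring G k φ :=
  (SimpleGraph.chromaticNumber_le_iff_colorable.mp hχ.le).exists_isProperColouring

/-- Otherwise, closing the gap left by a missing colour `c` gives a proper `(k - 1)`-colouring. -/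
theorem IsProperColouring.exists_eq_of_chromaticNumber {φ : V → ℕ}
    (hφ : IsProperColouring G k φ) (hχ : G.chromaticNumber = k) {c : ℕ} (hc : c ∈ Icc 1 k) :
    ∃ v, φ v = c := by
  by_contra! hmiss
  have hφ₁ : ∀ v, 1 ≤ φ v ∧ φ v ≤ k := fun v => mem_Icc.mp (hφ.1 v)
  have hc' := mem_Icc.mp hc
  have hgap : IsProperColouring G (k - 1) fun v => if φ v < c then φ v else φ v - 1 := by
    refine ⟨fun v => ?_, fun u v huv => ?_⟩
    · have := hφ₁ v
      have := hmiss v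
      simp only [mem_Icc]
      split_ifs <;> omega
    · have := hmiss u
      have := hmiss v
      have := hφ.2 huv
      dsimp only
      split_ifs <;> omega
  have hle : (k : ℕ∞) ≤ (k - 1 : ℕ) := hχ ▸ hgap.colorable.chromaticNumber_le
  have : k ≤ k - 1 := by exact_mod_cast hle
  omega

theorem IsProperColouring.update [DecidableEq V] {φ : V → ℕ} (hφ : IsProperColouring G k φ)
    {x : V} {c : ℕ} (hc : c ∈ Icc 1 k) (hfree : ∀ w, G.Adj x w → φ w ≠ c) :
    IsProperColouring G k (Function.update φ x c) := by
  refine ⟨fun v => ?_, fun u v huv => ?_⟩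
  · rcases eq_or_ne v x with rfl | hv
    · simpa using hc
    · simpa [hv] using hφ.1 v
  · rcases eq_or_ne u x with rfl | hu
    · simpa [huv.ne'] using (hfree v huv).symm
    · rcases eq_or_ne v x with rfl | hv
      · simpa [hu] using hfree u huv.symm
      · simpa [hu, hv] using hφ.2 huv

theorem IsProperColouring.injective_top {φ : V → ℕ}
    (hφ : IsProperColouring (⊤ : SimpleGraph V) k φ) : Function.Injective φ :=
  fun a b hab => by_contra fun hne => hφ.2 ((SimpleGraph.top_adj a b).mpr hne) hab

theorem IsProperColouring.comp_iso {φ : V → ℕ} (hφ : IsProperColouring G k φ) (σ : G ≃g G) :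
    IsProperColouring G k (φ ∘ σ) :=
  ⟨fun v => hφ.1 (σ v), fun _ _ huv => hφ.2 (σ.map_adj_iff.mpr huv)⟩

theorem IsSudoku.comp_iso_eq {ψ : V → Option ℕ} (hψ : IsSudoku G k ψ) {φ : V → ℕ}
    (hφ : IsProperColouring G k φ) (hext : ExtendsPartial φ ψ) (σ : G ≃g G)
    (hσ : ∀ v, (ψ v).isSome → σ v = v) : φ ∘ σ = φ := by
  obtain ⟨_, _, huniq⟩ := hψ.2
  refine (huniq _ ⟨hφ.comp_iso σ, fun v c hv => ?_⟩).trans (huniq _ ⟨hφ, hext⟩).symm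
  simpa [hσ v (by simp [hv])] using hext v c hv

theorem finite_setOf_isProperColouring [Finite V] : {φ | IsProperColouring G k φ}.Finite :=
  (Set.Finite.pi fun _ => Set.finite_Icc 1 k).subset fun φ hφ v _ => by
    simpa using hφ.1 v

theorem IsProperColouring.eq_of_forall_exists_adj {ρ φ : V → ℕ} (hρ : IsProperColouring G k ρ)
    {x : V} (h : ∀ c ∈ Icc 1 k, c ≠ φ x → ∃ w, G.Adj x w ∧ ρ w = c) : ρ x = φ x := by
  by_contra hne
  obtain ⟨w, hxw, hw⟩ := h (ρ x) (hρ.1 x) hne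
  exact hρ.2 hxw hw.symm

end Colouring

def IsDeterminedOutside {V : Type*} (G : SimpleGraph V) (k : ℕ) (φ : V → ℕ) (s : Finset V) :
    Prop :=
  ∀ ρ, IsProperColouring G k ρ → (∀ w ∉ s, ρ w = φ w) → ρ = φ

section Sudoku

variable {V : Type*} [Fintype V] {G : SimpleGraph V} {k : ℕ}

theorem exists_isSudoku_of_isDeterminedOutside {φ : V → ℕ} (hφ : IsProperColouring G k φ)
    {s : Finset V} (hs : IsDeterminedOutside G k φ s) :
    ∃ ψ, IsSudoku G k ψ ∧ #(univ.filter fun w => (ψ w).isSome) = Fintype.card V - #s := by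
  classical
  let ψ : V → Option ℕ := fun w => if w ∈ s then none else some (φ w)
  have hψ : ∀ w c, ψ w = some c → w ∉ s ∧ φ w = c := fun w c h => by
    by_cases hw : w ∈ s <;> simp_all [ψ]
  refine ⟨ψ, ⟨⟨fun w c h => ?_, fun u v huv c hu hv => ?_⟩, φ, ⟨hφ, ?_⟩, ?_⟩, ?_⟩
  · exact (hψ w c h).2 ▸ hφ.1 w
  · exact hφ.2 huv ((hψ u c hu).2.trans (hψ v c hv).2.symm)
  · exact fun w c h => (hψ w c h).2
  · rintro ρ ⟨hρ, hρψ⟩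
    exact hs ρ hρ fun w hw => hρψ w (φ w) (by simp [ψ, hw])
  · have : (univ.filter fun w => (ψ w).isSome) = univ \ s := by
      ext w
      by_cases hw : w ∈ s <;> simp [ψ, hw]
    rw [this, card_univ_sdiff]

theorem sudokuNumber_le_of_isDeterminedOutside {φ : V → ℕ} (hφ : IsProperColouring G k φ)
    {s : Finset V} (hs : IsDeterminedOutside G k φ s) :
    sudokuNumber G k ≤ Fintype.card V - #s :=
  Nat.sInf_le (exists_isSudoku_of_isDeterminedOutside hφ hs)

theorem sudokuNumber_lt_of_isDeterminedOutside_pair [DecidableEq V] {φ : V → ℕ} {u v : V}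
    (hφ : IsProperColouring G k φ) (huv : u ≠ v) (h : IsDeterminedOutside G k φ {u, v}) :
    sudokuNumber G k < Fintype.card V - 1 := by
  have hle := sudokuNumber_le_of_isDeterminedOutside hφ h
  have hcard := card_le_univ ({u, v} : Finset V)
  rw [card_pair huv] at hle hcard
  omega

theorem exists_isOneMinimal (h : ∃ φ, IsProperColouring G k φ) : ∃ φ, IsOneMinimal G k φ := by
  obtain ⟨φ, hφ, hmin⟩ := Set.exists_min_image {φ | IsProperColouring G k φ}
    (fun φ : V → ℕ => #(univ.filter fun v => φ v = 1)) finite_setOf_isProperColouring h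
  exact ⟨φ, hφ, hmin⟩

theorem IsSudoku.card_sub_one_le_top {ψ : V → Option ℕ}
    (hψ : IsSudoku (⊤ : SimpleGraph V) k ψ) :
    Fintype.card V - 1 ≤ #(univ.filter fun w => (ψ w).isSome) := by
  classical
  obtain ⟨ρ, ⟨hρ, hρψ⟩, -⟩ := hψ.2
  have hswap : ∀ a b, (ψ a).isSome = false → (ψ b).isSome = false → a = b := fun a b ha hb => by
    have : ρ (Equiv.swap a b a) = ρ a := congrFun (hψ.comp_iso_eq hρ hρψ
      (.completeGraph (Equiv.swap a b)) fun v hv =>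
        Equiv.swap_apply_of_ne_of_ne (by rintro rfl; simp_all) (by rintro rfl; simp_all)) a
    rw [Equiv.swap_apply_left] at this
    exact (hρ.injective_top this).symm
  have hsplit := card_filter_add_card_filter_not (s := univ) fun w => (ψ w).isSome
  have huncoloured : #(univ.filter fun w => ¬ (ψ w).isSome) ≤ 1 :=
    card_le_one.mpr fun a ha b hb => hswap a b (by simpa using ha) (by simpa using hb)
  rw [card_univ] at hsplit
  omega

end Sudoku

section Full

variable {V : Type*} [Fintype V] [DecidableEq V] {G : SimpleGraph V} [DecidableRel G.Adj]
  {k : ℕ} {φ : V → ℕ} {u v y : V}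

theorem IsFull.exists_adj (h : IsFull G k φ v) {c : ℕ} (hc : c ∈ Icc 1 k) (hcv : c ≠ φ v) :
    ∃ w, G.Adj v w ∧ φ w = c := by
  have : c ∈ (G.neighborFinset v).image φ := h ▸ mem_sdiff.mpr ⟨hc, by simpa using hcv⟩
  simpa using this

theorem IsProperColouring.isFull_of_forall (hφ : IsProperColouring G k φ)
    (h : ∀ c ∈ Icc 1 k, c ≠ φ v → ∃ w, G.Adj v w ∧ φ w = c) : IsFull G k φ v := by
  ext c
  simp only [mem_image, SimpleGraph.mem_neighborFinset, mem_sdiff, mem_singleton]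
  constructor
  · rintro ⟨w, hvw, rfl⟩
    exact ⟨hφ.1 w, (hφ.2 hvw).symm⟩
  · exact fun ⟨hc, hcv⟩ => h c hc hcv

theorem IsProperColouring.exists_missing_colour_of_not_isFull (hφ : IsProperColouring G k φ)
    (h : ¬ IsFull G k φ v) : ∃ e ∈ Icc 1 k, e ≠ φ v ∧ ∀ w, G.Adj v w → φ w ≠ e := by
  contrapose! h
  exact hφ.isFull_of_forall h

theorem IsFull.update_of_not_adj (h : IsFull G k φ v) {a : V} (hva : v ≠ a)
    (hav : ¬ G.Adj v a) (e : ℕ) : IsFull G k (Function.update φ a e) v := by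
  unfold IsFull at h ⊢
  rw [Function.update_of_ne hva, ← h]
  refine image_congr fun w hw => Function.update_of_ne ?_ _ _
  rintro rfl
  exact hav (by simpa using hw)

theorem isDeterminedOutside_pair
    (hu : ∀ c ∈ Icc 1 k, c ≠ φ u → ∃ w, G.Adj u w ∧ w ≠ v ∧ φ w = c) (hv : IsFull G k φ v) :
    IsDeterminedOutside G k φ {u, v} := by
  intro ρ hρ hagree
  have hρu : ρ u = φ u := hρ.eq_of_forall_exists_adj fun c hc hcu => by
    obtain ⟨w, huw, hwv, rfl⟩ := hu c hc hcu
    exact ⟨w, huw, hagree w (by simp [huw.ne', hwv])⟩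
  have hρ' : ∀ w ≠ v, ρ w = φ w := fun w hwv => by
    rcases eq_or_ne w u with rfl | hwu
    · exact hρu
    · exact hagree w (by simp [hwu, hwv])
  have hρv : ρ v = φ v := hρ.eq_of_forall_exists_adj fun c hc hcv => by
    obtain ⟨w, hvw, rfl⟩ := hv.exists_adj hc hcv
    exact ⟨w, hvw, hρ' w hvw.ne'⟩
  funext w
  rcases eq_or_ne w v with rfl | hwv
  · exact hρv
  · exact hρ' w hwv

theorem isDeterminedOutside_pair_of_not_adj (hu : IsFull G k φ u) (hv : IsFull G k φ v)
    (huv : ¬ G.Adj u v) : IsDeterminedOutside G k φ {u, v} :=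
  isDeterminedOutside_pair (fun _ hc hcu => by
    obtain ⟨w, huw, rfl⟩ := hu.exists_adj hc hcu
    exact ⟨w, huw, by rintro rfl; exact huv huw, rfl⟩) hv

/-- Otherwise recolouring `v` with a colour missing around it would save a vertex of colour 1. -/
theorem IsOneMinimal.isFull (h : IsOneMinimal G k φ) (hv : φ v = 1) : IsFull G k φ v := by
  by_contra hnf
  obtain ⟨e, he, hev, hfree⟩ := h.1.exists_missing_colour_of_not_isFull hnf
  have hlt : #(univ.filter fun w => Function.update φ v e w = 1) <
      #(univ.filter fun w => φ w = 1) := by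
    refine card_lt_card ((ssubset_iff_of_subset fun w => ?_).mpr ⟨v, by simpa using hv, ?_⟩)
    · rcases eq_or_ne w v with rfl | hwv <;> simp_all
    · simpa [hv] using hev
  exact (h.2 _ (h.1.update he hfree)).not_gt hlt

theorem IsProperColouring.isFull_top {φ : V → ℕ}
    (hφ : IsProperColouring (⊤ : SimpleGraph V) (Fintype.card V) φ) (v : V) :
    IsFull ⊤ (Fintype.card V) φ v :=
  hφ.isFull_of_forall fun c hc hcv => by
    obtain ⟨w, rfl⟩ := hφ.exists_eq_of_chromaticNumber SimpleGraph.chromaticNumber_top hc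
    exact ⟨w, (SimpleGraph.top_adj v w).mpr fun h => hcv (h ▸ rfl), rfl⟩

end Full

def IsHubColouring {V : Type*} [Fintype V] [DecidableEq V] (G : SimpleGraph V)
    [DecidableRel G.Adj] (k : ℕ) (φ : V → ℕ) (y : V) : Prop :=
  IsProperColouring G k φ ∧ (∀ w, φ w = 1 ↔ w = y) ∧ IsFull G k φ y

def IsHeavyColour {V : Type*} (G : SimpleGraph V) (φ : V → ℕ) (y : V) (c : ℕ) : Prop :=
  ∃ a b, a ≠ b ∧ G.Adj y a ∧ G.Adj y b ∧ φ a = c ∧ φ b = c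

section Hub

variable {V : Type*} [Fintype V] [DecidableEq V] {G : SimpleGraph V} [DecidableRel G.Adj]
  {k : ℕ} {φ : V → ℕ} {y : V}

theorem IsFull.exists_adj_ne_of_isHeavyColour (hy : IsFull G k φ y) {v : V}
    (hv : IsHeavyColour G φ y (φ v)) {c : ℕ} (hc : c ∈ Icc 1 k) (hcy : c ≠ φ y) :
    ∃ w, G.Adj y w ∧ w ≠ v ∧ φ w = c := by
  obtain ⟨w, hyw, rfl⟩ := hy.exists_adj hc hcy
  rcases eq_or_ne w v with rfl | hwv
  · obtain ⟨a, b, hab, hya, hyb, ha, hb⟩ := hv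
    rcases eq_or_ne a w with rfl | haw
    · exact ⟨b, hyb, hab.symm, hb⟩
    · exact ⟨a, hya, haw, ha⟩
  · exact ⟨w, hyw, hwv, rfl⟩

theorem isDeterminedOutside_pair_of_isHeavyColour (hy : IsFull G k φ y) {v : V}
    (hv : IsFull G k φ v) (hheavy : IsHeavyColour G φ y (φ v)) :
    IsDeterminedOutside G k φ {y, v} :=
  isDeterminedOutside_pair (fun _ hc hcy => hy.exists_adj_ne_of_isHeavyColour hheavy hc hcy) hv

/-- Otherwise recolour `w` with a colour missing around it and `y` with the old colour of `w`:
colour `1` disappears, which is impossible for a `χ(G)`-colouring. -/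
theorem IsProperColouring.isFull_of_not_isHeavyColour (hχ : G.chromaticNumber = k)
    (hφ : IsProperColouring G k φ) (hφ₁ : ∀ w, φ w = 1 ↔ w = y) {w : V} (hyw : G.Adj y w)
    (hw : ¬ IsHeavyColour G φ y (φ w)) : IsFull G k φ w := by
  by_contra hnf
  obtain ⟨e, he, hew, hfree⟩ := hφ.exists_missing_colour_of_not_isFull hnf
  have hy : φ y = 1 := (hφ₁ y).mpr rfl
  have he₁ : e ≠ 1 := fun h => hfree y hyw.symm (hy.trans h.symm)
  have hφ' := hφ.update he hfree
  have hφ'' := hφ'.update (x := y) (hφ.1 w) fun x hyx => by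
    rcases eq_or_ne x w with rfl | hxw
    · simpa using hew
    · rw [Function.update_of_ne hxw]
      exact fun hx => hw ⟨x, w, hxw, hyx, hyw, hx, rfl⟩
  obtain ⟨z, hz⟩ := hφ''.exists_eq_of_chromaticNumber hχ (hy ▸ hφ.1 y)
  rcases eq_or_ne z y with rfl | hzy
  · simp only [Function.update_self] at hz
    exact hyw.ne ((hφ₁ w).mp hz).symm
  rcases eq_or_ne z w with rfl | hzw
  · simp [hzy, he₁] at hz
  · simp only [Function.update_of_ne hzy, Function.update_of_ne hzw] at hz
    exact hzy ((hφ₁ z).mp hz)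

theorem IsHubColouring.update (hφ : IsHubColouring G k φ y) {a : V} (hya : G.Adj y a)
    (hheavy : IsHeavyColour G φ y (φ a)) {e : ℕ} (he : e ∈ Icc 1 k)
    (hfree : ∀ w, G.Adj a w → φ w ≠ e) : IsHubColouring G k (Function.update φ a e) y := by
  obtain ⟨hproper, hφ₁, hfull⟩ := hφ
  have he₁ : e ≠ 1 := fun h => hfree y hya.symm ((hφ₁ y).mpr rfl ▸ h.symm)
  have hproper' := hproper.update he hfree
  refine ⟨hproper', fun w => ?_, hproper'.isFull_of_forall fun c hc hcy => ?_⟩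
  · rcases eq_or_ne w a with rfl | hwa
    · simp [he₁, hya.ne']
    · simp [hwa, hφ₁]
  · rw [Function.update_of_ne hya.ne] at hcy
    obtain ⟨w, hyw, hwa, rfl⟩ := hfull.exists_adj_ne_of_isHeavyColour hheavy hc hcy
    exact ⟨w, hyw, Function.update_of_ne hwa _ _⟩

end Hub

theorem SimpleGraph.Connected.exists_adj_adj_not_adj {V : Type*} {G : SimpleGraph V}
    (hG : G.Connected) {y z : V} (hzy : z ≠ y) (hyz : ¬ G.Adj y z) :
    ∃ u x, G.Adj y u ∧ G.Adj u x ∧ x ≠ y ∧ ¬ G.Adj y x := by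
  obtain ⟨p⟩ := hG.preconnected y z
  obtain ⟨d, -, hd₁, hd₂⟩ := p.exists_boundary_dart {w | w = y ∨ G.Adj y w} (Or.inl rfl)
    (by simp [hzy, hyz])
  simp only [Set.mem_ofPred_eq, not_or] at hd₁ hd₂
  rcases hd₁ with hd₁ | hd₁
  · exact absurd (hd₁ ▸ d.adj) hd₂.2
  · exact ⟨d.fst, d.snd, hd₁, d.adj, hd₂.1, hd₂.2⟩

theorem SimpleGraph.eq_top_of_forall_adj {V : Type*} {G : SimpleGraph V} {y : V}
    (hy : ∀ z, z ≠ y → G.Adj y z) (hcl : ∀ a b, G.Adj y a → G.Adj y b → a ≠ b → G.Adj a b) :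
    G = ⊤ := by
  ext a b
  refine ⟨G.ne_of_adj, fun hab => ?_⟩
  rcases eq_or_ne a y with rfl | hay
  · exact hy b hab.symm
  rcases eq_or_ne b y with rfl | hby
  · exact (hy a hay).symm
  · exact hcl a b (hy a hay) (hy b hby) hab

section Extremal

variable {V : Type*} [Fintype V] [DecidableEq V] {G : SimpleGraph V} [DecidableRel G.Adj]
  {k : ℕ} {ρ : V → ℕ} {y : V}

/-- Let `a` be a neighbour of `y` of the least heavy colour. If `a` is full, `{y, a}` is a
determining pair. Otherwise recolour `a` with a colour `e` missing around it: if `e` is larger,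
the colour sum grows; if `e` is smaller, it is light, and `y` with its unique neighbour of
colour `e` is a determining pair for the recoloured colouring. -/
theorem sudokuNumber_lt_of_isHeavyColour (hχ : G.chromaticNumber = k)
    (hρ : IsHubColouring G k ρ y)
    (hmax : ∀ φ, IsHubColouring G k φ y → ∑ v, φ v ≤ ∑ v, ρ v) {c : ℕ}
    (hc : IsHeavyColour G ρ y c) (hmin : ∀ c', IsHeavyColour G ρ y c' → c ≤ c') :
    sudokuNumber G k < Fintype.card V - 1 := by
  obtain ⟨a, b, hab, hya, hyb, rfl, hb⟩ := hc
  have hheavy : IsHeavyColour G ρ y (ρ a) := ⟨a, b, hab, hya, hyb, rfl, hb⟩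
  by_cases hfa : IsFull G k ρ a
  · exact sudokuNumber_lt_of_isDeterminedOutside_pair hρ.1 hya.ne
      (isDeterminedOutside_pair_of_isHeavyColour hρ.2.2 hfa hheavy)
  obtain ⟨e, he, hea, hfree⟩ := hρ.1.exists_missing_colour_of_not_isFull hfa
  have hρ' := hρ.update hya hheavy he hfree
  rcases hea.lt_or_gt with hlt | hgt
  · have he₁ : e ≠ ρ y := fun h => hfree y hya.symm h.symm
    obtain ⟨x, hyx, hx⟩ := hρ.2.2.exists_adj he he₁
    have hxa : x ≠ a := by rintro rfl; exact hea hx.symm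
    have hfx : IsFull G k ρ x := hρ.1.isFull_of_not_isHeavyColour hχ hρ.2.1 hyx
      (hx ▸ fun h => (hmin e h).not_gt hlt)
    have hfx' := hfx.update_of_not_adj hxa (fun hax => hfree x hax.symm hx) e
    refine sudokuNumber_lt_of_isDeterminedOutside_pair hρ'.1 hyx.ne
      (isDeterminedOutside_pair_of_isHeavyColour hρ'.2.2 hfx' ?_)
    refine ⟨a, x, hxa.symm, hya, hyx, ?_, rfl⟩
    rw [Function.update_self, Function.update_of_ne hxa, hx]
  · have hle : ∀ w, ρ w ≤ Function.update ρ a e w := fun w => by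
      rcases eq_or_ne w a with rfl | hwa
      · simpa using hgt.le
      · simp [hwa]
    have hlt := sum_lt_sum (fun w _ => hle w) ⟨a, mem_univ a, by simpa using hgt⟩
    exact absurd (hmax _ hρ') (not_le.mpr hlt)

/-- All neighbours of `y` are full and carry distinct colours, so they form a clique. A vertex `x`
at distance two from `y`, through `u`, shares its colour with some neighbour `v` of `y`; then
`u` sees every colour other than its own outside `v` (colour `1` at `y`, `ρ x` at `x`, the rest
inside the clique), so `{u, v}` is a determining pair. -/
theorem sudokuNumber_lt_of_forall_not_isHeavyColour (hχ : G.chromaticNumber = k)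
    (hconn : G.Connected) (hG : G ≠ ⊤) (hρ : IsHubColouring G k ρ y)
    (hlight : ∀ c, ¬ IsHeavyColour G ρ y c) : sudokuNumber G k < Fintype.card V - 1 := by
  obtain ⟨hproper, hρ₁, hfull⟩ := hρ
  have hy : ρ y = 1 := (hρ₁ y).mpr rfl
  have hnbr : ∀ w, G.Adj y w → IsFull G k ρ w := fun w hyw =>
    hproper.isFull_of_not_isHeavyColour hχ hρ₁ hyw (hlight _)
  by_cases hcl : ∃ a b, G.Adj y a ∧ G.Adj y b ∧ a ≠ b ∧ ¬ G.Adj a b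
  · obtain ⟨a, b, hya, hyb, hab, hnab⟩ := hcl
    exact sudokuNumber_lt_of_isDeterminedOutside_pair hproper hab
      (isDeterminedOutside_pair_of_not_adj (hnbr a hya) (hnbr b hyb) hnab)
  push Not at hcl
  obtain ⟨z, hzy, hyz⟩ : ∃ z, z ≠ y ∧ ¬ G.Adj y z := by
    by_contra! h
    exact hG (SimpleGraph.eq_top_of_forall_adj h hcl)
  obtain ⟨u, x, hyu, hux, hxy, hyx⟩ := hconn.exists_adj_adj_not_adj hzy hyz
  obtain ⟨v, hyv, hv⟩ := hfull.exists_adj (hproper.1 x) (by rwa [hy, Ne, hρ₁])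
  have huv : u ≠ v := by rintro rfl; exact hproper.2 hux hv
  refine sudokuNumber_lt_of_isDeterminedOutside_pair hproper huv
    (isDeterminedOutside_pair (fun c hc hcu => ?_) (hnbr v hyv))
  by_cases hc₁ : c = 1
  · exact ⟨y, hyu.symm, hyv.ne, hc₁ ▸ hy⟩
  by_cases hcx : c = ρ x
  · exact ⟨x, hux, by rintro rfl; exact hyx hyv, hcx.symm⟩
  obtain ⟨w, hyw, rfl⟩ := hfull.exists_adj hc (hy ▸ hc₁)
  refine ⟨w, hcl u w hyu hyw fun h => hcu (h ▸ rfl), ?_, rfl⟩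
  rintro rfl
  exact hcx hv

end Extremal

section Main

variable {V : Type*} [Fintype V] {G : SimpleGraph V} {k : ℕ}

theorem sudokuNumber_top [Nonempty V] :
    sudokuNumber (⊤ : SimpleGraph V) (Fintype.card V) = Fintype.card V - 1 := by
  classical
  obtain ⟨φ, hφ⟩ :=
    exists_isProperColouring_of_chromaticNumber (SimpleGraph.chromaticNumber_top (V := V))
  obtain ⟨v⟩ := ‹Nonempty V›
  have hψ := exists_isSudoku_of_isDeterminedOutside hφ (by
    simpa using isDeterminedOutside_pair_of_not_adj (hφ.isFull_top v) (hφ.isFull_top v)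
      (SimpleGraph.irrefl _))
  rw [card_singleton] at hψ
  exact le_antisymm (Nat.sInf_le hψ)
    (le_csInf ⟨_, hψ⟩ fun m ⟨ψ, hψ, hm⟩ => hm ▸ hψ.card_sub_one_le_top)

/-- Take a colouring with as few vertices of colour `1` as possible. Its vertices of colour `1`
are full, so two of them would form a determining pair. Otherwise a single vertex `y` has
colour `1`; among such colourings with `y` full take one of maximal colour sum, and split on
whether some colour is repeated around `y`. -/
theorem sudokuNumber_lt_of_ne_top (hχ : G.chromaticNumber = k) (hconn : G.Connected)
    (hG : G ≠ ⊤) : sudokuNumber G k < Fintype.card V - 1 := by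
  classical
  obtain ⟨φ, hφ⟩ := exists_isOneMinimal (exists_isProperColouring_of_chromaticNumber hχ)
  by_cases htwo : ∃ a b, a ≠ b ∧ φ a = 1 ∧ φ b = 1
  · obtain ⟨a, b, hab, ha, hb⟩ := htwo
    exact sudokuNumber_lt_of_isDeterminedOutside_pair hφ.1 hab
      (isDeterminedOutside_pair_of_not_adj (hφ.isFull ha) (hφ.isFull hb)
        fun h => hφ.1.2 h (ha.trans hb.symm))
  push Not at htwo
  obtain ⟨v₀⟩ := hconn.nonempty
  have h₁ : 1 ∈ Icc 1 k := by
    have := mem_Icc.mp (hφ.1.1 v₀)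
    exact mem_Icc.mpr ⟨le_rfl, by omega⟩
  obtain ⟨y, hy⟩ := hφ.1.exists_eq_of_chromaticNumber hχ h₁
  have hhub : IsHubColouring G k φ y :=
    ⟨hφ.1, fun w => ⟨fun hw => by_contra fun hwy => htwo w y hwy hw hy, by rintro rfl; exact hy⟩,
      hφ.isFull hy⟩
  obtain ⟨ρ, hρ, hmax⟩ := Set.exists_max_image {φ | IsHubColouring G k φ y}
    (fun φ : V → ℕ => ∑ v, φ v) (finite_setOf_isProperColouring.subset fun _ h => h.1) ⟨φ, hhub⟩
  by_cases hheavy : ∃ c, IsHeavyColour G ρ y c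
  · exact sudokuNumber_lt_of_isHeavyColour hχ hρ hmax (Nat.find_spec hheavy)
      fun c' hc' => Nat.find_min' hheavy hc'
  · exact sudokuNumber_lt_of_forall_not_isHeavyColour hχ hconn hG hρ (not_exists.mp hheavy)

end Main

theorem stmt_10_general {V : Type*} [Fintype V]
    (G : SimpleGraph V) (k : ℕ)
    (hχ : G.chromaticNumber = k)
    (hconn : G.Connected) :
    sudokuNumber G k = Fintype.card V - 1 ↔ G = ⊤ := by
  refine ⟨fun hsn => by_contra fun hG => (sudokuNumber_lt_of_ne_top hχ hconn hG).ne hsn, ?_⟩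
  rintro rfl
  have hk : k = Fintype.card V := by
    rw [SimpleGraph.chromaticNumber_top] at hχ
    exact_mod_cast hχ.symm
  subst hk
  have := hconn.nonempty
  exact sudokuNumber_top

theorem stmt_10 {V : Type*} [Fintype V] [DecidableEq V]
    (G : SimpleGraph V) [DecidableRel G.Adj] (k : ℕ)
    (hχ : G.chromaticNumber = k)
    (hconn : G.Connected) :
    sudokuNumber G k = Fintype.card V - 1 ↔ G = ⊤ :=
  stmt_10_general G k hχ hconn
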